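/- Let (A,B,C,E) be the CCF of a minimal encoder G of an (n,k,δ) convolutional code C and (Â,B̂,Ĉ,Ê) the CCF of a minimal encoder Ĝ of the dual code Ĉ. Then Ĉ S_0^T + Ŝ_0 C^T = N A + Â^T N̂^T. -/

import Mathlib

open Polynomial Matrix
open scoped Classical

noncomputable section

namespace ConvCode

variable (F : Type) [Field F] [Fintype F]

/-- Hamming weight of a vector. -/
def wt {n : ℕ} (a : Fin n → F) : ℕ := (Finset.univ.filter fun j => a j ≠ 0).card

/-- Weight enumerator of a set of vectors in `F^n`, as a polynomial in `ℂ[W]`. -/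
def weSet {n : ℕ} (S : Set (Fin n → F)) : Polynomial ℂ :=
  ∑ a ∈ (Set.toFinite S).toFinset, (Polynomial.X : Polynomial ℂ) ^ wt F a

/-- The `i`-th row degree of a polynomial matrix. -/
def rowDeg {k n : ℕ} (G : Matrix (Fin k) (Fin n) (Polynomial F)) (i : Fin k) : ℕ :=
  Finset.univ.sup fun j => (G i j).natDegree

/-- `G` is basic: it has a polynomial right inverse. -/
def IsBasic {k n : ℕ} (G : Matrix (Fin k) (Fin n) (Polynomial F)) : Prop :=
  ∃ H : Matrix (Fin n) (Fin k) (Polynomial F), G * H = 1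

/-- The degree of the code: maximal degree of the `k × k` minors of `G`. -/
def codeDeg {k n : ℕ} (G : Matrix (Fin k) (Fin n) (Polynomial F)) : ℕ :=
  Finset.univ.sup fun f : Fin k ↪ Fin n => ((G.submatrix id f).det).natDegree

/-- A minimal (basic) encoder: the sum of the row degrees equals the degree of the code. -/
def IsMinimalEncoder {k n : ℕ} (G : Matrix (Fin k) (Fin n) (Polynomial F)) : Prop :=
  IsBasic F G ∧ ∑ i, rowDeg F G i = codeDeg F G

/-- The convolutional code generated by the encoder `G`. -/
def code {k n : ℕ} (G : Matrix (Fin k) (Fin n) (Polynomial F)) : Set (Fin n → Polynomial F) :=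
  Set.range fun u : Fin k → Polynomial F => u ᵥ* G

/-- The (module-theoretic) dual of a convolutional code. -/
def dualCode {n : ℕ} (𝓒 : Set (Fin n → Polynomial F)) : Set (Fin n → Polynomial F) :=
  {w | ∀ v ∈ 𝓒, w ⬝ᵥ v = 0}

/-- The sequence-space pairing `⟨⟨v,w⟩⟩ = ∑_t v_t w_tᵀ`. -/
def seqPair {n : ℕ} (v w : Fin n → Polynomial F) : F :=
  ∑ j, ∑ t ∈ Finset.range ((v j).natDegree + 1), (v j).coeff t * (w j).coeff t

/-- The sequence space dual of a convolutional code. -/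
def seqDual {n : ℕ} (𝓒 : Set (Fin n → Polynomial F)) : Set (Fin n → Polynomial F) :=
  {w | ∀ v ∈ 𝓒, ∀ l : ℕ, seqPair F v (fun j => Polynomial.X ^ l * w j) = 0}

/-- Index set of the state space of the controller canonical form:
a state index is a pair `(i, ν)` with `i` a row index and `ν < δ_i`. -/
abbrev StateIdx (k : ℕ) (d : Fin k → ℕ) : Type := (i : Fin k) × Fin (d i)

/-- The state-transition matrix `A` of the controller canonical form. -/
def ccfA {k : ℕ} (d : Fin k → ℕ) : Matrix (StateIdx k d) (StateIdx k d) F :=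
  Matrix.of fun s t => if s.1 = t.1 ∧ (s.2 : ℕ) + 1 = (t.2 : ℕ) then 1 else 0

/-- The input-to-state matrix `B` of the controller canonical form. -/
def ccfB {k : ℕ} (d : Fin k → ℕ) : Matrix (Fin k) (StateIdx k d) F :=
  Matrix.of fun i t => if t.1 = i ∧ (t.2 : ℕ) = 0 then 1 else 0

/-- The state-to-output matrix `C` of the controller canonical form. -/
def ccfC {k n : ℕ} (d : Fin k → ℕ) (G : Matrix (Fin k) (Fin n) (Polynomial F)) :
    Matrix (StateIdx k d) (Fin n) F :=
  Matrix.of fun s j => (G s.1 j).coeff ((s.2 : ℕ) + 1)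

/-- The matrix `E = G(0)` of the controller canonical form. -/
def ccfE {k n : ℕ} (G : Matrix (Fin k) (Fin n) (Polynomial F)) : Matrix (Fin k) (Fin n) F :=
  Matrix.of fun i j => (G i j).coeff 0

/-- The state index set of the controller canonical form of `G`. -/
abbrev States {k n : ℕ} (G : Matrix (Fin k) (Fin n) (Polynomial F)) : Type :=
  StateIdx k (rowDeg F G)

def matA {k n : ℕ} (G : Matrix (Fin k) (Fin n) (Polynomial F)) :
    Matrix (States F G) (States F G) F := ccfA F (rowDeg F G)

def matB {k n : ℕ} (G : Matrix (Fin k) (Fin n) (Polynomial F)) :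
    Matrix (Fin k) (States F G) F := ccfB F (rowDeg F G)

def matC {k n : ℕ} (G : Matrix (Fin k) (Fin n) (Polynomial F)) :
    Matrix (States F G) (Fin n) F := ccfC F (rowDeg F G) G

def matE {k n : ℕ} (G : Matrix (Fin k) (Fin n) (Polynomial F)) :
    Matrix (Fin k) (Fin n) F := ccfE F G

/-- The weight adjacency matrix of a state space realization `(A,B,C,E)`. -/
def WAM {σ : Type} [Fintype σ] {k n : ℕ} (A : Matrix σ σ F) (B : Matrix (Fin k) σ F)
    (C : Matrix σ (Fin n) F) (E : Matrix (Fin k) (Fin n) F) :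
    Matrix (σ → F) (σ → F) (Polynomial ℂ) :=
  Matrix.of fun X Y =>
    weSet F {v | ∃ u : Fin k → F, Y = X ᵥ* A + u ᵥ* B ∧ v = X ᵥ* C + u ᵥ* E}

/-- The weight adjacency matrix of an encoder `G` (via its controller canonical form). -/
def wam {k n : ℕ} (G : Matrix (Fin k) (Fin n) (Polynomial F)) :
    Matrix (States F G → F) (States F G → F) (Polynomial ℂ) :=
  WAM F (matA F G) (matB F G) (matC F G) (matE F G)

/-- The block code `C_const = 𝓒 ∩ F^n` of constant codewords. -/
def constSet {k n : ℕ} (G : Matrix (Fin k) (Fin n) (Polynomial F)) : Set (Fin n → F) :=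
  {w | (fun j => Polynomial.C (w j)) ∈ code F G}

/-- The block code `C_coeff` of coefficient vectors of codewords. -/
def coeffSet {k n : ℕ} (G : Matrix (Fin k) (Fin n) (Polynomial F)) : Set (Fin n → F) :=
  {w | ∃ v ∈ code F G, ∃ t : ℕ, ∀ j, (v j).coeff t = w j}

/-- The dual of a block code. -/
def blockDual {n : ℕ} (S : Set (Fin n → F)) : Set (Fin n → F) :=
  {w | ∀ v ∈ S, w ⬝ᵥ v = 0}

/-- `Δ`: the set of state pairs `(X,Y)` admitting a transition `Y = XA + uB`. -/
def Delta {k n : ℕ} (G : Matrix (Fin k) (Fin n) (Polynomial F)) :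
    Set ((States F G → F) × (States F G → F)) :=
  {p | ∃ u : Fin k → F, p.2 = p.1 ᵥ* matA F G + u ᵥ* matB F G}

/-- `Δ⁻ = {(0,Y) : Y ∈ im A}`. -/
def DeltaMinus {k n : ℕ} (G : Matrix (Fin k) (Fin n) (Polynomial F)) :
    Set ((States F G → F) × (States F G → F)) :=
  {p | p.1 = 0 ∧ ∃ X : States F G → F, p.2 = X ᵥ* matA F G}

/-- `Ω = {(X,Y) ∈ Δ : XC + Y Bᵀ E ∈ C_const}`. -/
def Omega {k n : ℕ} (G : Matrix (Fin k) (Fin n) (Polynomial F)) :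
    Set ((States F G → F) × (States F G → F)) :=
  {p | p ∈ Delta F G ∧
    p.1 ᵥ* matC F G + (p.2 ᵥ* (matB F G)ᵀ) ᵥ* matE F G ∈ constSet F G}

/-- Orthogonal of a set of state pairs with respect to the standard bilinear form on `F^{2δ}`. -/
def pairPerp {σ : Type} [Fintype σ] (S : Set ((σ → F) × (σ → F))) :
    Set ((σ → F) × (σ → F)) :=
  {p | ∀ s ∈ S, p.1 ⬝ᵥ s.1 + p.2 ⬝ᵥ s.2 = 0}

/-- `S_0 = Bᵀ E` and `S_i = Bᵀ B A^{i-1} C` for `i ≥ 1`. -/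
def Smat {k n : ℕ} (d : Fin k → ℕ) (G : Matrix (Fin k) (Fin n) (Polynomial F)) :
    ℕ → Matrix (StateIdx k d) (Fin n) F
  | 0 => (ccfB F d)ᵀ * ccfE F G
  | (i + 1) => (ccfB F d)ᵀ * ccfB F d * ccfA F d ^ i * ccfC F d G

def Sm {k n : ℕ} (G : Matrix (Fin k) (Fin n) (Polynomial F)) :
    ℕ → Matrix (States F G) (Fin n) F := Smat F (rowDeg F G) G

/-- The matrix `N = ∑_{m≥2} ∑_{i=1}^{m-1} ∑_{j=0}^{i-1} (Âᵀ)^{i-1} Ŝ_j S_{m-j}ᵀ A^{m-(i+1)}`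
(all summands with `m ≥ δ + δ̂` vanish, so the sum is truncated there). -/
def Nm {k kb n : ℕ} (G : Matrix (Fin k) (Fin n) (Polynomial F))
    (Gh : Matrix (Fin kb) (Fin n) (Polynomial F)) :
    Matrix (States F Gh) (States F G) F :=
  ∑ m ∈ Finset.Icc 2 (Fintype.card (States F G) + Fintype.card (States F Gh)),
    ∑ i ∈ Finset.Icc 1 (m - 1), ∑ j ∈ Finset.range i,
      (matA F Gh)ᵀ ^ (i - 1) * Sm F Gh j * (Sm F G (m - j))ᵀ * matA F G ^ (m - (i + 1))

/-- The reciprocal matrix `G' = diag(D^{δ_1},…,D^{δ_k}) · G(D⁻¹)`. -/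
def recip {k n : ℕ} (G : Matrix (Fin k) (Fin n) (Polynomial F)) :
    Matrix (Fin k) (Fin n) (Polynomial F) :=
  Matrix.of fun i j => (G i j).reflect (rowDeg F G i)

/-- The block diagonal matrix `R` whose blocks are the anti-identity matrices. -/
def Rmat {k : ℕ} (d : Fin k → ℕ) : Matrix (StateIdx k d) (StateIdx k d) F :=
  Matrix.of fun s t => if s.1 = t.1 ∧ (s.2 : ℕ) + (t.2 : ℕ) + 1 = d s.1 then 1 else 0

/-- The MacWilliams matrix `𝓗 = q^{-δ/2} (ζ^{τ(X Yᵀ)})_{X,Y}`. -/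
def macH (σ : Type) [Fintype σ] (p : ℕ) [Algebra (ZMod p) F] (ζ : ℂ) :
    Matrix (σ → F) (σ → F) ℂ :=
  Matrix.of fun X Y =>
    (((Real.sqrt (Fintype.card F) : ℝ) : ℂ))⁻¹ ^ Fintype.card σ *
      ζ ^ (Algebra.trace (ZMod p) F (X ⬝ᵥ Y)).val

/-- The MacWilliams transform `H(f)(W) = (1+(q-1)W)^n f((1-W)/(1+(q-1)W))`
on polynomials of degree at most `n`. -/
def macWT (q n : ℕ) (f : Polynomial ℂ) : Polynomial ℂ :=
  ∑ j ∈ Finset.range (n + 1),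
    Polynomial.C (f.coeff j) * (1 - Polynomial.X) ^ j *
      (1 + Polynomial.C ((q : ℂ) - 1) * Polynomial.X) ^ (n - j)

end ConvCode

/-!
In controller canonical form a state is a pair `(i, ν)` with `ν < δ_i`: `A` raises `ν` by one and
`Bᵀ B` projects onto the states with `ν = 0`. Hence `S_m = Bᵀ G_m`, where `G_m` is the coefficient
of `D^m` in `G`, and at the entry `((i, ν), (i', ν'))` of `N` only the summands of the outer
sums with `m = ν + ν' + 2` and inner index `ν + 1` survive. With `K_{a,b} = Ĝ_a G_bᵀ`, that entry
of both sides is the `(i, i')` entry of a partial sum of `∑_{a+b=ν+ν'+1} K_{a,b}`, which is the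
coefficient of `D^{ν+ν'+1}` in `Ĝ Gᵀ = 0`.
Splitting that sum after `a = ν` into `P + Q = 0`, the left side is `[ν' = 0] Q + [ν = 0] P`
and the right side is `[ν' ≠ 0] P + [ν ≠ 0] Q`, which agree in each of the four cases.
-/

namespace ConvCode

open Finset

section PolynomialMatrix

variable {R : Type*} [Semiring R] {l m o : Type*}

def coeffMat (P : Matrix l m R[X]) (a : ℕ) : Matrix l m R := P.map fun p => p.coeff a

lemma coeffMat_transpose (P : Matrix l m R[X]) (a : ℕ) : coeffMat Pᵀ a = (coeffMat P a)ᵀ := rfl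

lemma coeffMat_mul [Fintype m] (P : Matrix l m R[X]) (Q : Matrix m o R[X]) (c : ℕ) :
    coeffMat (P * Q) c = ∑ p ∈ antidiagonal c, coeffMat P p.1 * coeffMat Q p.2 := by
  ext i r
  simp only [coeffMat, map_apply, mul_apply, finsetSum_coeff, coeff_mul, Matrix.sum_apply]
  exact Finset.sum_comm

end PolynomialMatrix

lemma sum_antidiagonal_eq_sum_range_add_sum_range {M : Type*} [AddCommMonoid M]
    (f : ℕ → ℕ → M) (ν ν' : ℕ) :
    ∑ p ∈ antidiagonal (ν + ν' + 1), f p.1 p.2 =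
      ∑ a ∈ range (ν + 1), f a (ν + ν' + 1 - a) +
        ∑ b ∈ range (ν' + 1), f (ν + ν' + 1 - b) b := by
  rw [Nat.sum_antidiagonal_eq_sum_range_succ f, Nat.succ_eq_add_one,
    show ν + ν' + 1 + 1 = ν + 1 + (ν' + 1) by omega, sum_range_add, ← sum_range_reflect _ (ν' + 1)]
  congr 1
  refine sum_congr rfl fun b hb => ?_
  have := mem_range.mp hb
  congr 1 <;> omega

variable {F : Type} [Field F]

lemma mul_transpose_eq_zero_of_code_subset_dualCode {k kb n : ℕ}
    {G : Matrix (Fin k) (Fin n) F[X]} {Gh : Matrix (Fin kb) (Fin n) F[X]}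
    (hdual : code F Gh ⊆ dualCode F (code F G)) : Gh * Gᵀ = 0 := by
  have row_mem : ∀ {p : ℕ} (M : Matrix (Fin p) (Fin n) F[X]) (i : Fin p), M i ∈ code F M :=
    fun M i => ⟨Pi.single i 1, single_one_vecMul i M⟩
  exact Matrix.ext fun i i' => hdual (row_mem Gh i) _ (row_mem G i')

lemma sum_range_add_sum_range_eq_zero {k kb n : ℕ}
    {G : Matrix (Fin k) (Fin n) F[X]} {Gh : Matrix (Fin kb) (Fin n) F[X]}
    (hdual : code F Gh ⊆ dualCode F (code F G)) (ν ν' : ℕ) :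
    ∑ a ∈ range (ν + 1), coeffMat Gh a * (coeffMat G (ν + ν' + 1 - a))ᵀ +
      ∑ b ∈ range (ν' + 1), coeffMat Gh (ν + ν' + 1 - b) * (coeffMat G b)ᵀ = 0 := by
  rw [← sum_antidiagonal_eq_sum_range_add_sum_range (fun a b => coeffMat Gh a * (coeffMat G b)ᵀ)]
  simp only [← coeffMat_transpose, ← coeffMat_mul,
    mul_transpose_eq_zero_of_code_subset_dualCode hdual]
  rfl

section ControllerCanonicalForm

variable {k : ℕ} (d : Fin k → ℕ)

lemma sum_stateIdx_ite_eq {M : Type*} [AddCommMonoid M] (i : Fin k) (c : ℕ)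
    (f : StateIdx k d → M) :
    ∑ t : StateIdx k d, (if t.1 = i ∧ (t.2 : ℕ) = c then f t else 0) =
      if h : c < d i then f ⟨i, c, h⟩ else 0 := by
  split_ifs with h
  · refine (Fintype.sum_eq_single ⟨i, c, h⟩ fun t ht => if_neg ?_).trans (if_pos ⟨rfl, rfl⟩)
    obtain ⟨i', ν⟩ := t
    rintro ⟨rfl, hν⟩
    exact ht (by subst hν; rfl)
  · refine Fintype.sum_eq_zero _ fun ⟨i', ν⟩ => if_neg ?_
    rintro ⟨rfl, rfl⟩
    exact h ν.2

lemma snd_lt_card_stateIdx (s : StateIdx k d) : (s.2 : ℕ) < Fintype.card (StateIdx k d) :=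
  s.2.2.trans_le <| (Fintype.card_fin _).symm.le.trans <|
    Fintype.card_le_of_embedding (Function.Embedding.sigmaMk (β := fun i => Fin (d i)) s.1)

variable {ρ : Type*}

lemma mul_ccfA_apply_zero (X : Matrix ρ (StateIdx k d) F) (r : ρ) (i : Fin k) (h : 0 < d i) :
    (X * ccfA F d) r ⟨i, 0, h⟩ = 0 :=
  sum_eq_zero fun u _ => by simp [ccfA]

lemma mul_ccfA_apply_succ (X : Matrix ρ (StateIdx k d) F) (r : ρ) (i : Fin k) (ν : ℕ)
    (h : ν + 1 < d i) : (X * ccfA F d) r ⟨i, ν + 1, h⟩ = X r ⟨i, ν, by omega⟩ := by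
  have := sum_stateIdx_ite_eq d i ν (X r)
  rw [dif_pos (by omega)] at this
  rw [mul_apply, ← this]
  exact sum_congr rfl fun u _ => by simp [ccfA]

lemma ccfB_mul_ccfA_pow_apply (p : ℕ) (i : Fin k) (t : StateIdx k d) :
    (ccfB F d * ccfA F d ^ p) i t = if t.1 = i ∧ (t.2 : ℕ) = p then 1 else 0 := by
  induction p generalizing t with
  | zero => simp [ccfB]
  | succ p ih =>
    obtain ⟨i', _ | ν, h⟩ := t
    · rw [pow_succ, ← Matrix.mul_assoc, mul_ccfA_apply_zero]
      simp
    · rw [pow_succ, ← Matrix.mul_assoc, mul_ccfA_apply_succ, ih]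
      simp

lemma mul_ccfB_mul_ccfA_pow_apply (X : Matrix ρ (Fin k) F) (p : ℕ) (r : ρ) (t : StateIdx k d) :
    (X * (ccfB F d * ccfA F d ^ p)) r t = if (t.2 : ℕ) = p then X r t.1 else 0 := by
  rw [mul_apply]
  simp [ccfB_mul_ccfA_pow_apply, ite_and]

lemma ccfB_mul_ccfA_pow_transpose_mul_apply (X : Matrix (Fin k) ρ F) (p : ℕ) (s : StateIdx k d)
    (r : ρ) : ((ccfB F d * ccfA F d ^ p)ᵀ * X) s r = if (s.2 : ℕ) = p then X s.1 r else 0 := by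
  rw [← transpose_apply (_ * X), transpose_mul, transpose_transpose, mul_ccfB_mul_ccfA_pow_apply]
  rfl

lemma mul_ccfB_apply (X : Matrix ρ (Fin k) F) (r : ρ) (t : StateIdx k d) :
    (X * ccfB F d) r t = if (t.2 : ℕ) = 0 then X r t.1 else 0 := by
  simpa using mul_ccfB_mul_ccfA_pow_apply d X 0 r t

lemma ccfB_transpose_mul_apply (X : Matrix (Fin k) ρ F) (s : StateIdx k d) (r : ρ) :
    ((ccfB F d)ᵀ * X) s r = if (s.2 : ℕ) = 0 then X s.1 r else 0 := by
  simpa using ccfB_mul_ccfA_pow_transpose_mul_apply d X 0 s r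

lemma ccfB_mul_ccfA_pow_mul_ccfC {n : ℕ} {G : Matrix (Fin k) (Fin n) F[X]}
    (hd : ∀ i j, (G i j).natDegree ≤ d i) (p : ℕ) :
    ccfB F d * ccfA F d ^ p * ccfC F d G = coeffMat G (p + 1) := by
  ext i j
  rw [mul_apply]
  simp only [ccfB_mul_ccfA_pow_apply, ite_mul, one_mul, zero_mul]
  rw [sum_stateIdx_ite_eq]
  split_ifs with h
  · rfl
  · exact (coeff_eq_zero_of_natDegree_lt ((hd i j).trans_lt (by omega))).symm

end ControllerCanonicalForm

section Encoder

variable {k kb n : ℕ} (G : Matrix (Fin k) (Fin n) F[X]) (Gh : Matrix (Fin kb) (Fin n) F[X])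

lemma natDegree_le_rowDeg (i : Fin k) (j : Fin n) : (G i j).natDegree ≤ rowDeg F G i :=
  le_sup (f := fun j => (G i j).natDegree) (mem_univ j)

lemma Sm_eq (m : ℕ) : Sm F G m = (matB F G)ᵀ * coeffMat G m := by
  cases m with
  | zero => rfl
  | succ m =>
    change (ccfB F _)ᵀ * ccfB F _ * ccfA F _ ^ m * ccfC F _ G = _
    rw [Matrix.mul_assoc, Matrix.mul_assoc, ← Matrix.mul_assoc (ccfB F _),
      ccfB_mul_ccfA_pow_mul_ccfC _ (natDegree_le_rowDeg G)]
    rfl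

lemma Nm_apply (s : States F Gh) (t : States F G) :
    Nm F G Gh s t = ∑ a ∈ range (s.2 + 1),
      (coeffMat Gh a * (coeffMat G (s.2 + t.2 + 2 - a))ᵀ) s.1 t.1 := by
  have summand : ∀ m i a, ((matA F Gh)ᵀ ^ (i - 1) * Sm F Gh a * (Sm F G (m - a))ᵀ *
      matA F G ^ (m - (i + 1))) s t = if (s.2 : ℕ) = i - 1 ∧ (t.2 : ℕ) = m - (i + 1) then
        (coeffMat Gh a * (coeffMat G (m - a))ᵀ) s.1 t.1 else 0 := by
    intro m i a
    have regroup : (matA F Gh)ᵀ ^ (i - 1) * Sm F Gh a * (Sm F G (m - a))ᵀ *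
        matA F G ^ (m - (i + 1)) =
        (matB F Gh * matA F Gh ^ (i - 1))ᵀ * (coeffMat Gh a * (coeffMat G (m - a))ᵀ) *
          (matB F G * matA F G ^ (m - (i + 1))) := by
      simp only [Sm_eq, transpose_mul, transpose_pow, transpose_transpose, Matrix.mul_assoc]
    rw [regroup]
    simp only [matB, matA]
    rw [mul_ccfB_mul_ccfA_pow_apply, ccfB_mul_ccfA_pow_transpose_mul_apply]
    simp only [ite_and]
    split_ifs <;> rfl
  have hs : (s.2 : ℕ) < Fintype.card (States F Gh) := snd_lt_card_stateIdx _ s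
  have ht : (t.2 : ℕ) < Fintype.card (States F G) := snd_lt_card_stateIdx _ t
  simp only [Nm, Matrix.sum_apply, summand]
  rw [sum_eq_single_of_mem ((s.2 : ℕ) + t.2 + 2) (mem_Icc.mpr ⟨by omega, by omega⟩) ?_,
    sum_eq_single_of_mem ((s.2 : ℕ) + 1) (mem_Icc.mpr ⟨by omega, by omega⟩) ?_]
  · exact sum_congr rfl fun a _ => if_pos ⟨rfl, by omega⟩
  · intro i hi hne
    exact sum_eq_zero fun a _ => if_neg (by omega)
  · intro m hm hne
    refine sum_eq_zero fun i hi => sum_eq_zero fun a _ => if_neg ?_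
    simp only [mem_Icc] at hi
    omega

lemma matC_mul_Sm_zero_transpose_apply (s : States F Gh) (t : States F G) :
    (matC F Gh * (Sm F G 0)ᵀ) s t =
      if (t.2 : ℕ) = 0 then (coeffMat Gh (s.2 + 1) * (coeffMat G 0)ᵀ) s.1 t.1 else 0 := by
  rw [Sm_eq, transpose_mul, transpose_transpose, ← Matrix.mul_assoc, matB, mul_ccfB_apply]
  rfl

lemma Sm_zero_mul_matC_transpose_apply (s : States F Gh) (t : States F G) :
    (Sm F Gh 0 * (matC F G)ᵀ) s t =
      if (s.2 : ℕ) = 0 then (coeffMat Gh 0 * (coeffMat G (t.2 + 1))ᵀ) s.1 t.1 else 0 := by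
  rw [Sm_eq, Matrix.mul_assoc, matB, ccfB_transpose_mul_apply]
  rfl

lemma Nm_mul_matA_apply (s : States F Gh) (t : States F G) :
    (Nm F G Gh * matA F G) s t = if (t.2 : ℕ) = 0 then 0 else
      ∑ a ∈ range (s.2 + 1), (coeffMat Gh a * (coeffMat G (s.2 + t.2 + 1 - a))ᵀ) s.1 t.1 := by
  obtain ⟨i', _ | ν', h⟩ := t
  · exact mul_ccfA_apply_zero _ _ _ _ h
  · rw [matA, mul_ccfA_apply_succ, Nm_apply]
    rfl

lemma matA_transpose_mul_Nm_transpose_apply (s : States F Gh) (t : States F G) :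
    ((matA F Gh)ᵀ * (Nm F Gh G)ᵀ) s t = if (s.2 : ℕ) = 0 then 0 else
      ∑ b ∈ range (t.2 + 1), (coeffMat Gh (s.2 + t.2 + 1 - b) * (coeffMat G b)ᵀ) s.1 t.1 := by
  rw [← transpose_mul, transpose_apply, Nm_mul_matA_apply]
  refine if_congr Iff.rfl rfl (sum_congr rfl fun b _ => ?_)
  rw [← transpose_apply (coeffMat Gh _ * _), transpose_mul, transpose_transpose,
    add_comm (s.2 : ℕ)]

end Encoder

end ConvCode

theorem statement14_general {F : Type} [Field F]
    (k kb n : ℕ)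
    (G : Matrix (Fin k) (Fin n) (Polynomial F))
    (Gh : Matrix (Fin kb) (Fin n) (Polynomial F))
    (hdual : ConvCode.code F Gh = ConvCode.dualCode F (ConvCode.code F G)) :
    ConvCode.matC F Gh * (ConvCode.Sm F G 0)ᵀ + ConvCode.Sm F Gh 0 * (ConvCode.matC F G)ᵀ =
      ConvCode.Nm F G Gh * ConvCode.matA F G +
        (ConvCode.matA F Gh)ᵀ * (ConvCode.Nm F Gh G)ᵀ := by
  ext s t
  have horth := congrFun (congrFun
    (ConvCode.sum_range_add_sum_range_eq_zero hdual.le s.2 t.2) s.1) t.1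
  simp only [Matrix.add_apply, Matrix.sum_apply, Matrix.zero_apply] at horth
  rw [Matrix.add_apply, Matrix.add_apply, ConvCode.matC_mul_Sm_zero_transpose_apply,
    ConvCode.Sm_zero_mul_matC_transpose_apply, ConvCode.Nm_mul_matA_apply,
    ConvCode.matA_transpose_mul_Nm_transpose_apply]
  split_ifs <;> simp_all [add_comm]

/-- Proposition 4.7(b): `Ĉ S₀ᵀ + Ŝ₀ Cᵀ = N A + Âᵀ N̂ᵀ`. -/
theorem statement14 {F : Type} [Field F] [Fintype F]
    (k kb n : ℕ) (hkn : k + kb = n)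
    (G : Matrix (Fin k) (Fin n) (Polynomial F)) (hG : ConvCode.IsMinimalEncoder F G)
    (Gh : Matrix (Fin kb) (Fin n) (Polynomial F)) (hGh : ConvCode.IsMinimalEncoder F Gh)
    (hdual : ConvCode.code F Gh = ConvCode.dualCode F (ConvCode.code F G)) :
    ConvCode.matC F Gh * (ConvCode.Sm F G 0)ᵀ + ConvCode.Sm F Gh 0 * (ConvCode.matC F G)ᵀ =
      ConvCode.Nm F G Gh * ConvCode.matA F G +
        (ConvCode.matA F Gh)ᵀ * (ConvCode.Nm F Gh G)ᵀ :=
  statement14_general k kb n G Gh hdual
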